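/- arXiv:2410.23353 — 2 statements merged into one kernel-verified Lean document; each statement's English description precedes it below -/
import Mathlib

section
/- For integers K > t ≥ 1, (1/K) Σ_{j=0}^{K−1} cos^{2t}(jπ/K) = 2^{1−2t} · C(2t−1, t−1). -/
/-!
Writing `2 cos θ = x + x⁻¹` with `x = exp (iθ)`, the binomial theorem turns `(2 cos (jπ/K)) ^ (2t)`
into `∑ₖ C(2t, k) ζ^{j(k - t)}` with `ζ = exp (2πi/K)`. Summing over `j < K` kills every term with
`k ≠ t`, because `0 < |k - t| ≤ t < K` makes `ζ^{k - t}` a nontrivial `K`-th root of unity, and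
leaves `K · C(2t, t) = 2K · C(2t - 1, t - 1)`.
-/

open Finset Real

theorem IsPrimitiveRoot.sum_range_pow_zpow_eq_zero {F : Type*} [Field F] {ζ : F} {k : ℕ}
    (hζ : IsPrimitiveRoot ζ k) {m : ℤ} (hm : ¬ (k : ℤ) ∣ m) :
    ∑ j ∈ range k, (ζ ^ m) ^ j = 0 := by
  have hne : ζ ^ m ≠ 1 := mt (hζ.zpow_eq_one_iff_dvd m).mp hm
  have hpow : (ζ ^ m) ^ k = 1 := by
    rw [← zpow_natCast, ← zpow_mul, mul_comm, zpow_mul, hζ.zpow_eq_one, one_zpow]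
  rw [geom_sum_eq hne, hpow, sub_self, zero_div]

theorem add_inv_pow_two_mul {F : Type*} [Field F] {x : F} (hx : x ≠ 0) (t : ℕ) :
    (x + x⁻¹) ^ (2 * t) = ∑ k ∈ range (2 * t + 1), (x ^ 2) ^ ((k : ℤ) - t) * (2 * t).choose k := by
  rw [add_pow]
  refine sum_congr rfl fun k hk => ?_
  have hk : k ≤ 2 * t := Nat.lt_succ_iff.mp (mem_range.mp hk)
  rw [inv_pow, ← zpow_natCast, ← zpow_natCast x (2 * t - k), ← zpow_neg, ← zpow_add₀ hx,
    ← zpow_natCast x 2, ← zpow_mul]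
  push_cast [hk]
  ring_nf

theorem Complex.two_cos_ofReal_eq_exp_add_inv (θ : ℝ) :
    ((2 * Real.cos θ : ℝ) : ℂ) = exp (θ * I) + (exp (θ * I))⁻¹ := by
  rw [← Complex.exp_neg, ← neg_mul, ← Complex.two_cos]
  push_cast
  rfl

theorem sum_range_two_mul_cos_pow_two_mul {K t : ℕ} (htK : t < K) :
    ∑ j ∈ range K, (2 * cos (j * π / K)) ^ (2 * t) = K * (2 * t).choose t := by
  set ζ := Complex.exp (2 * π * Complex.I / K)
  have hζ : IsPrimitiveRoot ζ K := Complex.isPrimitiveRoot_exp K (by omega)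
  have hroot (j : ℕ) : Complex.exp ((j * π / K : ℝ) * Complex.I) ^ 2 = ζ ^ j := by
    rw [← Complex.exp_nat_mul, ← Complex.exp_nat_mul]
    push_cast
    ring_nf
  have hexpand (j : ℕ) : (((2 * cos (j * π / K)) ^ (2 * t) : ℝ) : ℂ)
      = ∑ k ∈ range (2 * t + 1), (ζ ^ ((k : ℤ) - t)) ^ j * (2 * t).choose k := by
    rw [Complex.ofReal_pow, Complex.two_cos_ofReal_eq_exp_add_inv,
      add_inv_pow_two_mul (Complex.exp_ne_zero _), hroot]
    simp only [← zpow_natCast, ← zpow_mul, mul_comm]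
  have hvanish (k : ℕ) (hk : k ∈ range (2 * t + 1)) (hkt : k ≠ t) :
      ∑ j ∈ range K, (ζ ^ ((k : ℤ) - t)) ^ j = 0 := by
    refine hζ.sum_range_pow_zpow_eq_zero fun hdvd => hkt ?_
    rw [mem_range] at hk
    have := Int.eq_zero_of_abs_lt_dvd hdvd (abs_lt.mpr ⟨by omega, by omega⟩)
    omega
  apply Complex.ofReal_injective
  rw [Complex.ofReal_sum]
  simp only [hexpand]
  rw [sum_comm, sum_eq_single t (fun k hk hkt => by rw [← sum_mul, hvanish k hk hkt, zero_mul])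
    (fun h => absurd (mem_range.mpr (by omega)) h)]
  simp

theorem Nat.choose_two_mul_self_eq_two_mul {t : ℕ} (ht : 1 ≤ t) :
    (2 * t).choose t = 2 * (2 * t - 1).choose (t - 1) := by
  obtain ⟨s, rfl⟩ := Nat.exists_eq_add_of_le' ht
  rw [show 2 * (s + 1) = 2 * s + 1 + 1 by ring, Nat.choose_succ_succ', Nat.choose_symm_half,
    Nat.add_sub_cancel, Nat.add_sub_cancel, ← two_mul]

/-- For integers `K > t ≥ 1`,
`(1/K) Σ_{j=0}^{K−1} cos^{2t}(jπ/K) = 2^{1−2t} · C(2t−1, t−1)`. -/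
theorem cos_pow_sum_eq_central_binom
    (K t : ℕ) (ht : 1 ≤ t) (htK : t < K) :
    (1 / (K : ℝ)) * ∑ j ∈ Finset.range K, Real.cos ((j : ℝ) * Real.pi / (K : ℝ)) ^ (2 * t)
      = (2 : ℝ) ^ ((1 : ℤ) - 2 * (t : ℤ)) * (Nat.choose (2 * t - 1) (t - 1) : ℝ) := by
  have hK : (K : ℝ) ≠ 0 := Nat.cast_ne_zero.mpr (by omega)
  have hsum : ∑ j ∈ range K, cos (j * π / K) ^ (2 * t) = K * (2 * t).choose t / 2 ^ (2 * t) := by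
    rw [← sum_range_two_mul_cos_pow_two_mul htK, sum_div]
    refine sum_congr rfl fun j _ => ?_
    rw [mul_pow, mul_div_cancel_left₀ _ (pow_ne_zero _ two_ne_zero)]
  have hzpow : (2 : ℝ) ^ ((1 : ℤ) - 2 * (t : ℤ)) = 2 / 2 ^ (2 * t) := by
    rw [zpow_sub₀ two_ne_zero, zpow_one]
    norm_cast
  rw [hsum, hzpow, Nat.choose_two_mul_self_eq_two_mul ht]
  push_cast
  field_simp
end

section
/- Let S_φ = {φ_1,...,φ_{K−2}} be unit vectors in ℂ^{2^{n−1}} and set ψ_j = φ_j ⊗ |1⟩ ∈ ℂ^{2^n}, and let |f⟩, |p⟩ be as defined (both ending in |0⟩ on the last qubit). Then for the multiset S = {|f⟩⊗|0⟩, |p⟩⊗|0⟩} ∪ {ψ_j}, the state frame potential satisfies F_t(S) = (1 − 2/K)² F_t(S_φ) + (2/K²)[1 + (s(f)/2^{n−2})^{2t}]. -/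
private lemma sum_last_ff {α : Type*} [Fintype α] (g h : α → ℂ) :
    ∑ z : α × Bool, (starRingEnd ℂ) (if z.2 = false then g z.1 else 0) *
      (if z.2 = false then h z.1 else 0) = ∑ a, (starRingEnd ℂ) (g a) * h a := by
  rw [Fintype.sum_prod_type]
  simp [Fintype.sum_bool]

private lemma sum_last_tt {α : Type*} [Fintype α] (g h : α → ℂ) :
    ∑ z : α × Bool, (starRingEnd ℂ) (if z.2 = true then g z.1 else 0) *
      (if z.2 = true then h z.1 else 0) = ∑ a, (starRingEnd ℂ) (g a) * h a := by
  rw [Fintype.sum_prod_type]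
  simp [Fintype.sum_bool]

private lemma sum_last_ft {α : Type*} [Fintype α] (g h : α → ℂ) :
    ∑ z : α × Bool, (starRingEnd ℂ) (if z.2 = false then g z.1 else 0) *
      (if z.2 = true then h z.1 else 0) = 0 := by
  apply Finset.sum_eq_zero
  intro z _
  rcases z with ⟨p, _ | _⟩ <;> simp

private lemma sum_last_tf {α : Type*} [Fintype α] (g h : α → ℂ) :
    ∑ z : α × Bool, (starRingEnd ℂ) (if z.2 = true then g z.1 else 0) *
      (if z.2 = false then h z.1 else 0) = 0 := by
  apply Finset.sum_eq_zero
  intro z _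
  rcases z with ⟨p, _ | _⟩ <;> simp


/-- Let `S_φ = {φ_1,...,φ_{K−2}}` be unit vectors in `ℂ^{2^{n−1}}` and set
`ψ_j = φ_j ⊗ |1⟩ ∈ ℂ^{2^n}`, and let `|f⟩, |p⟩` be as defined (both ending in `|0⟩` on
the last qubit).  Then for the multiset `S = {|f⟩⊗|0⟩, |p⟩⊗|0⟩} ∪ {ψ_j}` of cardinality
`K = M + 2`, the state frame potential satisfies
`F_t(S) = (1 − 2/K)² F_t(S_φ) + (2/K²)[1 + (s(f)/2^{n−2})^{2t}]`. -/
theorem frame_potential_of_augmented_set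
    (n M t : ℕ) (hn : 3 ≤ n) (ht : 1 ≤ t)
    (f : (Fin (n - 2) → Bool) → Bool)
    (vf vp : ((Fin (n - 2) → Bool) × Bool) → ℂ)
    (hvf : vf = fun z => if z.2 = f z.1 then (((Real.sqrt 2 : ℂ))⁻¹) ^ (n - 2) else 0)
    (hvp : vp = fun z => if z.2 = true then (((Real.sqrt 2 : ℂ))⁻¹) ^ (n - 2) else 0)
    (φ : Fin M → ((Fin (n - 2) → Bool) × Bool) → ℂ)
    (hφ : ∀ j, ∑ a, ‖φ j a‖ ^ 2 = (1 : ℝ))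
    (Ψ : (Fin 2 ⊕ Fin M) → (((Fin (n - 2) → Bool) × Bool) × Bool) → ℂ)
    (hΨf : Ψ (Sum.inl 0) = fun z => if z.2 = false then vf z.1 else 0)
    (hΨp : Ψ (Sum.inl 1) = fun z => if z.2 = false then vp z.1 else 0)
    (hΨφ : ∀ j : Fin M, Ψ (Sum.inr j) = fun z => if z.2 = true then φ j z.1 else 0)
    (s : ℕ) (hs : s = (Finset.univ.filter (fun x : Fin (n - 2) → Bool => f x = true)).card) :
    (1 / ((M : ℝ) + 2) ^ 2) *
        ∑ i : Fin 2 ⊕ Fin M, ∑ i' : Fin 2 ⊕ Fin M,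
          ‖∑ z, (starRingEnd ℂ) (Ψ i z) * Ψ i' z‖ ^ (2 * t)
      = (1 - 2 / ((M : ℝ) + 2)) ^ 2 *
          ((1 / (M : ℝ) ^ 2) * ∑ j : Fin M, ∑ k : Fin M,
            ‖∑ a, (starRingEnd ℂ) (φ j a) * φ k a‖ ^ (2 * t))
        + (2 / ((M : ℝ) + 2) ^ 2) * (1 + ((s : ℝ) / 2 ^ (n - 2)) ^ (2 * t)) := by
  have hconj : (starRingEnd ℂ) (((Real.sqrt 2 : ℂ)) ^ (n - 2))⁻¹
      = (((Real.sqrt 2 : ℂ)) ^ (n - 2))⁻¹ := by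
    simp [map_pow, map_inv₀, Complex.conj_ofReal]
  have hcc : (((Real.sqrt 2 : ℂ)) ^ (n - 2))⁻¹ * (((Real.sqrt 2 : ℂ)) ^ (n - 2))⁻¹
      = (((2:ℝ) ^ (n - 2) : ℝ) : ℂ)⁻¹ := by
    have h2 : (Real.sqrt 2 : ℂ) * (Real.sqrt 2 : ℂ) = 2 := by
      norm_cast
      exact Real.mul_self_sqrt (by norm_num)
    rw [← mul_inv, ← mul_pow, h2]
    push_cast
    rfl
  have hpow_ne : (((2:ℝ) ^ (n - 2) : ℝ) : ℂ) ≠ 0 := by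
    norm_cast
    positivity
  -- ⟨f|f⟩ = 1
  have Iff : ∑ z, (starRingEnd ℂ) (Ψ (Sum.inl 0) z) * Ψ (Sum.inl 0) z = 1 := by
    rw [hΨf, sum_last_ff, hvf, Fintype.sum_prod_type]
    have key : ∀ x : Fin (n - 2) → Bool,
        (∑ b : Bool, (starRingEnd ℂ) (if b = f x then (((Real.sqrt 2 : ℂ))⁻¹) ^ (n - 2) else 0) *
          (if b = f x then (((Real.sqrt 2 : ℂ))⁻¹) ^ (n - 2) else 0))
        = (((2:ℝ) ^ (n - 2) : ℝ) : ℂ)⁻¹ := by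
      intro x
      cases h : f x <;> simp [h, hconj, hcc]
    rw [Finset.sum_congr rfl (fun x _ => key x), Finset.sum_const, Finset.card_univ]
    simp only [Fintype.card_fun, Fintype.card_bool, Fintype.card_fin, nsmul_eq_mul]
    push_cast
    rw [mul_inv_cancel₀ (pow_ne_zero _ (by norm_num : (2:ℂ) ≠ 0))]
  -- ⟨p|p⟩ = 1
  have Ipp : ∑ z, (starRingEnd ℂ) (Ψ (Sum.inl 1) z) * Ψ (Sum.inl 1) z = 1 := by
    rw [hΨp, sum_last_ff, hvp, Fintype.sum_prod_type]
    have key : ∀ x : Fin (n - 2) → Bool,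
        (∑ b : Bool, (starRingEnd ℂ) (if b = true then (((Real.sqrt 2 : ℂ))⁻¹) ^ (n - 2) else 0) *
          (if b = true then (((Real.sqrt 2 : ℂ))⁻¹) ^ (n - 2) else 0))
        = (((2:ℝ) ^ (n - 2) : ℝ) : ℂ)⁻¹ := by
      intro x
      simp [hconj, hcc]
    rw [Finset.sum_congr rfl (fun x _ => key x), Finset.sum_const, Finset.card_univ]
    simp only [Fintype.card_fun, Fintype.card_bool, Fintype.card_fin, nsmul_eq_mul]
    push_cast
    rw [mul_inv_cancel₀ (pow_ne_zero _ (by norm_num : (2:ℂ) ≠ 0))]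
  -- ⟨f|p⟩ = s / 2^(n-2)
  have Ifp : ∑ z, (starRingEnd ℂ) (Ψ (Sum.inl 0) z) * Ψ (Sum.inl 1) z
      = ((((s : ℝ) / 2 ^ (n - 2)) : ℝ) : ℂ) := by
    rw [hΨf, hΨp, sum_last_ff, hvf, hvp, Fintype.sum_prod_type]
    have key : ∀ x : Fin (n - 2) → Bool,
        (∑ b : Bool, (starRingEnd ℂ) (if b = f x then (((Real.sqrt 2 : ℂ))⁻¹) ^ (n - 2) else 0) *
          (if b = true then (((Real.sqrt 2 : ℂ))⁻¹) ^ (n - 2) else 0))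
        = if f x = true then (((2:ℝ) ^ (n - 2) : ℝ) : ℂ)⁻¹ else 0 := by
      intro x
      cases h : f x <;> simp [h, hconj, hcc]
    rw [Finset.sum_congr rfl (fun x _ => key x), ← Finset.sum_filter, Finset.sum_const, ← hs]
    push_cast [nsmul_eq_mul]
    ring
  -- ⟨p|f⟩ = s / 2^(n-2)
  have Ipf : ∑ z, (starRingEnd ℂ) (Ψ (Sum.inl 1) z) * Ψ (Sum.inl 0) z
      = ((((s : ℝ) / 2 ^ (n - 2)) : ℝ) : ℂ) := by
    rw [hΨp, hΨf, sum_last_ff, hvp, hvf, Fintype.sum_prod_type]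
    have key : ∀ x : Fin (n - 2) → Bool,
        (∑ b : Bool, (starRingEnd ℂ) (if b = true then (((Real.sqrt 2 : ℂ))⁻¹) ^ (n - 2) else 0) *
          (if b = f x then (((Real.sqrt 2 : ℂ))⁻¹) ^ (n - 2) else 0))
        = if f x = true then (((2:ℝ) ^ (n - 2) : ℝ) : ℂ)⁻¹ else 0 := by
      intro x
      cases h : f x <;> simp [h, hconj, hcc]
    rw [Finset.sum_congr rfl (fun x _ => key x), ← Finset.sum_filter, Finset.sum_const, ← hs]
    push_cast [nsmul_eq_mul]
    ring
  -- cross terms vanish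
  have Ic0 : ∀ j : Fin M, ∑ z, (starRingEnd ℂ) (Ψ (Sum.inl 0) z) * Ψ (Sum.inr j) z = 0 := by
    intro j; rw [hΨf, hΨφ j, sum_last_ft]
  have Ic1 : ∀ j : Fin M, ∑ z, (starRingEnd ℂ) (Ψ (Sum.inl 1) z) * Ψ (Sum.inr j) z = 0 := by
    intro j; rw [hΨp, hΨφ j, sum_last_ft]
  have Ir0 : ∀ j : Fin M, ∑ z, (starRingEnd ℂ) (Ψ (Sum.inr j) z) * Ψ (Sum.inl 0) z = 0 := by
    intro j; rw [hΨφ j, hΨf, sum_last_tf]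
  have Ir1 : ∀ j : Fin M, ∑ z, (starRingEnd ℂ) (Ψ (Sum.inr j) z) * Ψ (Sum.inl 1) z = 0 := by
    intro j; rw [hΨφ j, hΨp, sum_last_tf]
  have Iφ : ∀ j k : Fin M, ∑ z, (starRingEnd ℂ) (Ψ (Sum.inr j) z) * Ψ (Sum.inr k) z
      = ∑ a, (starRingEnd ℂ) (φ j a) * φ k a := by
    intro j k; rw [hΨφ j, hΨφ k, sum_last_tt]
  simp only [Fintype.sum_sum_type, Fin.sum_univ_two, Iff, Ipp, Ifp, Ipf, Ic0, Ic1, Ir0, Ir1, Iφ]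
  have hr : ‖((((s : ℝ) / 2 ^ (n - 2)) : ℝ) : ℂ)‖ = (s : ℝ) / 2 ^ (n - 2) := by
    rw [Complex.norm_real]
    exact abs_of_nonneg (by positivity)
  simp only [hr, norm_one, norm_zero, one_pow, zero_pow (by omega : 2 * t ≠ 0),
    Finset.sum_const_zero, add_zero, zero_add]
  set P : ℝ := ∑ x : Fin M, ∑ x_1 : Fin M,
    ‖∑ a : (Fin (n - 2) → Bool) × Bool, (starRingEnd ℂ) (φ x a) * φ x_1 a‖ ^ (2 * t) with hP
  set r : ℝ := ((s : ℝ) / 2 ^ (n - 2)) ^ (2 * t) with hrr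
  rcases Nat.eq_zero_or_pos M with hM | hM
  · subst hM
    have : P = 0 := by simp [hP]
    rw [this]
    norm_num
    ring
  · have hM0 : (M : ℝ) ≠ 0 := Nat.cast_ne_zero.mpr (by omega)
    have hM2 : (M : ℝ) + 2 ≠ 0 := by positivity
    field_simp
    ring
end
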